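/- The loop C = 'loop X_4 { loop X_3 {X_1 := X_2}; X_2 := X_1 + X_2 }' admits exponential growth: starting with X_2 = c ≥ 1 and X_3 ≥ 1, after k iterations of the outer loop (each fully exercising the inner loop once), the value 2^k · c is reachable in X_2. Hence the final value of X_2 is not polynomially bounded in the inputs. -/
import Mathlib


/-- Expressions of the core language `L_r`. -/
inductive Expr (n : ℕ) where
  | zero : Expr n
  | var (i : Fin n) : Expr n
  | add (i j : Fin n) : Expr n
  | mul (i j : Fin n) : Expr n

/-- Commands of the core language `L_r`. -/
inductive Cmd (n : ℕ) where
  | skip : Cmd n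
  | assign (l : Fin n) (e : Expr n) : Cmd n
  | seq (c₁ c₂ : Cmd n) : Cmd n
  | choose (c₁ c₂ : Cmd n) : Cmd n
  | loop (l : Fin n) (c : Cmd n) : Cmd n

def Expr.eval {n : ℕ} : Expr n → (Fin n → ℕ) → ℕ
  | .zero, _ => 0
  | .var i, x => x i
  | .add i j, x => x i + x j
  | .mul i j, x => x i * x j

/-- `i`-fold iteration of a relation (`iterRel R 0` is the identity). -/
def iterRel {α : Type*} (R : α → α → Prop) : ℕ → α → α → Prop
  | 0, x, y => y = x
  | k + 1, x, z => ∃ y, R x y ∧ iterRel R k y z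

/-- The (nondeterministic, exact-assignment) semantics `⟦C⟧ ⊆ ℕⁿ × ℕⁿ`. -/
def Sem {n : ℕ} : Cmd n → (Fin n → ℕ) → (Fin n → ℕ) → Prop
  | .skip, x, y => y = x
  | .assign l e, x, y => y = Function.update x l (e.eval x)
  | .seq c₁ c₂, x, y => ∃ z, Sem c₁ x z ∧ Sem c₂ z y
  | .choose c₁ c₂, x, y => Sem c₁ x y ∨ Sem c₂ x y
  | .loop l c, x, y => ∃ i ≤ x l, iterRel (Sem c) i x y

/-- `loop X₄ { loop X₃ { X₁ := X₂ }; X₂ := X₁ + X₂ }`. -/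
def doubler : Cmd 4 :=
  Cmd.loop 3 (Cmd.seq (Cmd.loop 2 (Cmd.assign 0 (Expr.var 1)))
    (Cmd.assign 1 (Expr.add 0 1)))

private abbrev dbody : Cmd 4 :=
  Cmd.seq (Cmd.loop 2 (Cmd.assign 0 (Expr.var 1))) (Cmd.assign 1 (Expr.add 0 1))

private lemma dbody_step (x : Fin 4 → ℕ) (h2 : 1 ≤ x 2) :
    ∃ w, Sem dbody x w ∧ w 1 = 2 * x 1 ∧ w 2 = x 2 ∧ w 3 = x 3 := by
  refine ⟨Function.update (Function.update x 0 (x 1)) 1 (x 1 + x 1), ?_, ?_, ?_, ?_⟩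
  · refine ⟨Function.update x 0 (x 1), ?_, ?_⟩
    · exact ⟨1, h2, Function.update x 0 (x 1), rfl, rfl⟩
    · show Function.update (Function.update x 0 (x 1)) 1 (x 1 + x 1) =
        Function.update (Function.update x 0 (x 1)) 1
          ((Expr.add 0 1).eval (Function.update x 0 (x 1)))
      simp [Expr.eval, Function.update]
  · simp [Function.update]; ring
  · simp [Function.update]
  · simp [Function.update]

private lemma doubler_iter (k : ℕ) : ∀ (x : Fin 4 → ℕ), 1 ≤ x 2 →
    ∃ y, iterRel (Sem dbody) k x y ∧ y 1 = 2 ^ k * x 1 ∧ y 2 = x 2 ∧ y 3 = x 3 := by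
  induction k with
  | zero => intro x _; exact ⟨x, rfl, by simp, rfl, rfl⟩
  | succ k ih =>
    intro x h2
    obtain ⟨w, hw, hw1, hw2, hw3⟩ := dbody_step x h2
    obtain ⟨y, hy, hy1, hy2, hy3⟩ := ih w (hw2 ▸ h2)
    refine ⟨y, ⟨w, hw, hy⟩, ?_, by rw [hy2, hw2], by rw [hy3, hw3]⟩
    rw [hy1, hw1, pow_succ]; ring

private lemma doubler_reach (c k : ℕ) (x : Fin 4 → ℕ) (h1 : x 1 = c) (h2 : 1 ≤ x 2)
    (h3 : k ≤ x 3) : ∃ y : Fin 4 → ℕ, Sem doubler x y ∧ y 1 = 2 ^ k * c := by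
  obtain ⟨y, hy, hy1, _, _⟩ := doubler_iter k x h2
  exact ⟨y, ⟨k, h3, hy⟩, by rw [hy1, h1]⟩

private lemma exists_two_pow_gt (C D : ℕ) : ∃ k, C * (k + 1) ^ D < 2 ^ k := by
  have h := isLittleO_pow_const_const_pow_of_one_lt (R := ℝ) D (by norm_num : (1:ℝ) < 2)
  have hC : (0:ℝ) < 1 / (2 * (C + 1)) := by positivity
  obtain ⟨a, ha⟩ := Filter.eventually_atTop.mp (h.def hC)
  refine ⟨a, ?_⟩
  have := ha (a + 1) (Nat.le_succ a)
  rw [Real.norm_eq_abs, Real.norm_eq_abs, abs_of_nonneg (by positivity),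
    abs_of_nonneg (by positivity)] at this
  have hcast : ((C * (a + 1) ^ D : ℕ) : ℝ) < ((2 ^ a : ℕ) : ℝ) := by
    push_cast
    calc (C : ℝ) * (a + 1) ^ D ≤ (C : ℝ) * (1 / (2 * (C + 1)) * 2 ^ (a + 1)) := by
          apply mul_le_mul_of_nonneg_left _ (by positivity)
          exact_mod_cast this
      _ = (C / (C + 1)) * 2 ^ a := by field_simp; ring
      _ < 1 * 2 ^ a := by
          apply mul_lt_mul_of_pos_right _ (by positivity)
          rw [div_lt_one (by positivity)]; linarith
      _ = 2 ^ a := by ring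
  exact_mod_cast hcast

private lemma eval_le (p : MvPolynomial (Fin 4) ℕ) (x : Fin 4 → ℕ) (k : ℕ)
    (hx : ∀ i, x i ≤ k + 1) :
    MvPolynomial.eval x p ≤ (∑ d ∈ p.support, p.coeff d) * (k + 1) ^ p.totalDegree := by
  rw [MvPolynomial.eval_eq, Finset.sum_mul]
  apply Finset.sum_le_sum
  intro d hd
  apply Nat.mul_le_mul_left
  calc ∏ i ∈ d.support, x i ^ d i ≤ ∏ i ∈ d.support, (k + 1) ^ d i :=
        Finset.prod_le_prod (fun _ _ => Nat.zero_le _)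
          (fun i _ => Nat.pow_le_pow_left (hx i) _)
    _ = (k + 1) ^ (d.sum fun _ e => e) := by
        rw [Finsupp.sum, ← Finset.prod_pow_eq_pow_sum]
    _ ≤ (k + 1) ^ p.totalDegree :=
        Nat.pow_le_pow_right (Nat.succ_le_succ (Nat.zero_le _)) (MvPolynomial.le_totalDegree hd)

/-- starting with `X₂ = c ≥ 1` and `X₃ ≥ 1`, the value `2^k·c`
is reachable in `X₂` whenever `X₄ ≥ k`; hence the final value of `X₂` is not
polynomially bounded in the inputs. -/
theorem doubler_exponential :
    (∀ (c k : ℕ) (x : Fin 4 → ℕ), 1 ≤ c → x 1 = c → 1 ≤ x 2 → k ≤ x 3 →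
      ∃ y : Fin 4 → ℕ, Sem doubler x y ∧ y 1 = 2 ^ k * c) ∧
    ¬ ∃ p : MvPolynomial (Fin 4) ℕ, ∀ x y : Fin 4 → ℕ,
        Sem doubler x y → y 1 ≤ MvPolynomial.eval x p := by
  constructor
  · intro c k x _ h1 h2 h3
    exact doubler_reach c k x h1 h2 h3
  · rintro ⟨p, hp⟩
    obtain ⟨k, hk⟩ := exists_two_pow_gt (∑ d ∈ p.support, p.coeff d) p.totalDegree
    set x : Fin 4 → ℕ := fun i => if i = 3 then k else 1 with hxdef
    obtain ⟨y, hy, hy1⟩ := doubler_reach 1 k x (by simp [hxdef]) (by simp [hxdef])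
      (by simp [hxdef])
    have hb := hp x y hy
    have hle := eval_le p x k (fun i => by by_cases h : i = 3 <;> simp [hxdef, h])
    rw [hy1] at hb
    have : 2 ^ k ≤ (∑ d ∈ p.support, p.coeff d) * (k + 1) ^ p.totalDegree := by
      calc 2 ^ k = 2 ^ k * 1 := by ring
        _ ≤ _ := le_trans hb hle
    omega
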